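/- arXiv:2509.15928 — 2 statements merged into one kernel-verified Lean document; each statement's English description precedes it below -/
import Mathlib

section
/- Let H and K be real Hilbert spaces, B : H → K a continuous linear map with Hilbert-space adjoint B*, T > 0, and let v : ℝ → H be Bochner integrable on [0, T]. Suppose that for almost every t ∈ [0, T] one has v(t) = −∫₀ᵗ B*(B(v(s))) ds. Then v(t) = 0 for almost every t ∈ [0, T]. (This abstracts the uniqueness argument for strong solutions: writing the Laplacian as −A = −B*B with B the gradient, a function satisfying v(t) = ∫₀ᵗ Δv(s) ds with zero data must vanish, since ∫₀ᵀ ‖v(t)‖² dt = −(1/2)‖∫₀ᵀ B v(t) dt‖² ≤ 0.) -/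
open MeasureTheory intervalIntegral

/-- Abstract uniqueness argument for strong solutions: if `v` is Bochner integrable
on `[0, T]` and satisfies `v t = -∫₀ᵗ B* (B (v s)) ds` for a.e. `t ∈ [0, T]`,
then `v = 0` a.e. on `[0, T]`. -/
theorem uniqueness_abstract
    {H K : Type*} [NormedAddCommGroup H] [InnerProductSpace ℝ H] [CompleteSpace H]
    [NormedAddCommGroup K] [InnerProductSpace ℝ K] [CompleteSpace K]
    (B : H →L[ℝ] K) (T : ℝ) (hT : 0 < T) (v : ℝ → H)
    (hv : IntegrableOn v (Set.Icc 0 T) volume)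
    (heq : ∀ᵐ t ∂(volume.restrict (Set.Icc (0:ℝ) T)),
      v t = -∫ s in (0:ℝ)..t, (ContinuousLinearMap.adjoint B) (B (v s))) :
    ∀ᵐ t ∂(volume.restrict (Set.Icc (0:ℝ) T)), v t = 0 := by
  set A : H →L[ℝ] H := (ContinuousLinearMap.adjoint B).comp B with hAdef
  have hAv : IntegrableOn (fun s => A (v s)) (Set.Icc 0 T) volume := A.integrable_comp hv
  set w : ℝ → H := fun t => ∫ s in (0:ℝ)..t, A (v s) with hwdef
  have heq' : ∀ᵐ t ∂(volume.restrict (Set.Icc (0:ℝ) T)), v t = -w t := heq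
  -- w is continuous on [0, T]
  have hwc : ContinuousOn w (Set.Icc 0 T) := by
    rw [show Set.Icc (0:ℝ) T = Set.uIcc 0 T from (Set.uIcc_of_le hT.le).symm]
    exact continuousOn_primitive_interval (by rwa [Set.uIcc_of_le hT.le])
  -- a.e. pointwise version of heq'
  have heqv : ∀ᵐ t ∂(volume : Measure ℝ), t ∈ Set.Icc (0:ℝ) T → v t = -w t :=
    (ae_restrict_iff' measurableSet_Icc).mp heq'
  -- the function g = A ∘ w is continuous on [0, T]
  set g : ℝ → H := fun s => A (w s) with hgdef
  have hgc : ContinuousOn g (Set.Icc 0 T) := A.continuous.comp_continuousOn hwc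
  set u : ℝ → H := fun x => ∫ s in (0:ℝ)..x, g s with hudef
  -- On [0, T], w = -u
  have hwu : ∀ t ∈ Set.Icc (0:ℝ) T, w t = -u t := by
    intro t ht
    have hsub : Set.uIoc (0:ℝ) t ⊆ Set.Icc 0 T := by
      rw [Set.uIoc_of_le ht.1]
      exact fun s hs => ⟨hs.1.le, hs.2.trans ht.2⟩
    have hcong : ∫ s in (0:ℝ)..t, A (v s) = ∫ s in (0:ℝ)..t, -g s := by
      apply intervalIntegral.integral_congr_ae
      filter_upwards [heqv] with s hs hmem
      have hsIcc : s ∈ Set.Icc (0:ℝ) T := hsub hmem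
      simp [hgdef, hs hsIcc]
    calc w t = ∫ s in (0:ℝ)..t, -g s := hcong
    _ = -u t := by rw [intervalIntegral.integral_neg]
  -- u has the right-derivative g on [0, T)
  have hu' : ∀ x ∈ Set.Ico (0:ℝ) T, HasDerivWithinAt u (g x) (Set.Ici x) x := by
    intro x hx
    have hIccsub : Set.Icc x T ⊆ Set.Icc 0 T := Set.Icc_subset_Icc hx.1 le_rfl
    have hmem : Set.Icc x T ∈ nhdsWithin x (Set.Ici x) :=
      Icc_mem_nhdsGE_of_mem ⟨le_rfl, hx.2⟩
    have hint : IntervalIntegrable g volume 0 x := by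
      apply ContinuousOn.intervalIntegrable
      rw [Set.uIcc_of_le hx.1]
      exact hgc.mono (Set.Icc_subset_Icc le_rfl hx.2.le)
    have hmem' : Set.Icc x T ∈ nhdsWithin x (Set.Ioi x) :=
      Icc_mem_nhdsGT_of_mem ⟨le_rfl, hx.2⟩
    have hmeas : StronglyMeasurableAtFilter g (nhdsWithin x (Set.Ioi x)) volume :=
      ⟨Set.Icc x T, hmem', ((hgc.mono hIccsub).aestronglyMeasurable measurableSet_Icc)⟩
    have hcont : ContinuousWithinAt g (Set.Ioi x) x := by
      have h1 : ContinuousWithinAt g (Set.Icc x T) x :=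
        (hgc x ⟨hx.1, hx.2.le⟩).mono hIccsub
      exact h1.mono_of_mem_nhdsWithin hmem'
    exact intervalIntegral.integral_hasDerivWithinAt_right hint hmeas hcont
  -- hence w has right-derivative -(g x) on [0, T)
  have hw' : ∀ x ∈ Set.Ico (0:ℝ) T, HasDerivWithinAt w (-(g x)) (Set.Ici x) x := by
    intro x hx
    have hIccsub : Set.Icc x T ⊆ Set.Icc 0 T := Set.Icc_subset_Icc hx.1 le_rfl
    have hmem : Set.Icc x T ∈ nhdsWithin x (Set.Ici x) :=
      Icc_mem_nhdsGE_of_mem ⟨le_rfl, hx.2⟩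
    have h1 : HasDerivWithinAt (fun y => -u y) (-(g x)) (Set.Icc x T) x :=
      ((hu' x hx).neg).mono Set.Icc_subset_Ici_self
    have h2 : HasDerivWithinAt w (-(g x)) (Set.Icc x T) x := by
      apply h1.congr
      · intro y hy; exact hwu y (hIccsub hy)
      · exact hwu x ⟨hx.1, hx.2.le⟩
    exact h2.mono_of_mem_nhdsWithin hmem
  -- Gronwall: w = 0 on [0, T]
  have hw0 : ∀ x ∈ Set.Icc (0:ℝ) T, w x = 0 := by
    have hgron := norm_le_gronwallBound_of_norm_deriv_right_le
      (f := w) (f' := fun x => -(g x)) (δ := 0) (K := ‖A‖) (ε := 0) (a := 0) (b := T)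
      hwc hw' (by simp [hwdef]) ?_
    · intro x hx
      have := hgron x hx
      rw [gronwallBound_ε0_δ0] at this
      exact norm_le_zero_iff.mp this
    · intro x hx
      rw [norm_neg, add_zero]
      exact A.le_opNorm (w x)
  -- conclude
  filter_upwards [heq', ae_restrict_mem measurableSet_Icc] with t ht hmem
  rw [ht, hw0 t hmem, neg_zero]
end

section
/- Let E be a real Banach space, d ≥ 1 a natural number, r > d − 1 a real number, and c₀, C > 0. Let (λ_n)_{n≥1} be positive reals with λ_n ≥ c₀ · n^{2/d} for all n ≥ 1, let (g_n)_{n≥1} be reals with ∑_{n≥1} λ_n^r g_n² < ∞, and let (c_n)_{n≥1} be elements of E with ‖c_n‖ ≤ C · λ_n^{−1/2} for all n ≥ 1. Then ∑_{n≥1} ‖g_n • c_n‖ < ∞; in particular the series ∑_{n≥1} g_n • c_n converges in E. (This is the convergence argument for the series ∑_n g_n c_{·,n} in L²(∂D) used to define the kernel G_z: the coefficient bound |g_n| ≤ λ_n^{−r/2}‖g‖_{Ḣʳ} for g ∈ Ḣʳ(D), the normal-derivative estimate ‖c_{·,n}‖_{L²(∂D)} ≤ Cλ_n^{−1/2}, and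 Weyl's law combine to give absolute convergence.) -/
/-- Absolute convergence of the series `∑_n g_n • c_n` in a Banach space `E`, given
Weyl-type lower bounds `λ_n ≥ c₀ n^{2/d}`, coefficient summability `∑ λ_n^r g_n² < ∞`
with `r > d - 1`, and the norm bound `‖c_n‖ ≤ C λ_n^{-1/2}`. -/
theorem series_abs_convergence
    {E : Type*} [NormedAddCommGroup E] [NormedSpace ℝ E] [CompleteSpace E]
    (d : ℕ) (hd : 1 ≤ d) (r : ℝ) (hr : r > (d : ℝ) - 1)
    (c₀ C : ℝ) (hc₀ : 0 < c₀) (hC : 0 < C)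
    (lam : ℕ → ℝ) (hlam : ∀ n : ℕ, 1 ≤ n → 0 < lam n)
    (hweyl : ∀ n : ℕ, 1 ≤ n → c₀ * (n : ℝ) ^ ((2 : ℝ) / d) ≤ lam n)
    (g : ℕ → ℝ) (hg : Summable fun n : ℕ => lam (n + 1) ^ (r : ℝ) * (g (n + 1)) ^ 2)
    (c : ℕ → E) (hc : ∀ n : ℕ, 1 ≤ n → ‖c n‖ ≤ C * lam n ^ (-(1 / 2) : ℝ)) :
    Summable (fun n : ℕ => ‖g (n + 1) • c (n + 1)‖) ∧
    Summable (fun n : ℕ => g (n + 1) • c (n + 1)) := by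
  have hd0 : (0 : ℝ) < d := by exact_mod_cast hd
  have hq : (2 : ℝ) / d * (-(r + 1)) < -1 := by
    rw [div_mul_eq_mul_div, div_lt_iff₀ hd0]
    nlinarith
  -- summability of λ_{n+1}^{-(r+1)}
  have h1 : Summable (fun n : ℕ => lam (n + 1) ^ (-(r + 1))) := by
    have hbase : Summable (fun n : ℕ =>
        c₀ ^ (-(r + 1)) * ((n + 1 : ℕ) : ℝ) ^ ((2 : ℝ) / d * (-(r + 1)))) :=
      ((summable_nat_add_iff 1).mpr (Real.summable_nat_rpow.2 hq)).mul_left _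
    refine Summable.of_nonneg_of_le (fun n => Real.rpow_nonneg (hlam (n + 1) (by omega)).le _)
      (fun n => ?_) hbase
    have hn0 : (0 : ℝ) ≤ ((n + 1 : ℕ) : ℝ) := by positivity
    have hn1 : (0 : ℝ) < ((n + 1 : ℕ) : ℝ) ^ ((2 : ℝ) / d) :=
      Real.rpow_pos_of_pos (by positivity) _
    have hle : c₀ * ((n + 1 : ℕ) : ℝ) ^ ((2 : ℝ) / d) ≤ lam (n + 1) :=
      hweyl (n + 1) (by omega)
    calc lam (n + 1) ^ (-(r + 1))
        ≤ (c₀ * ((n + 1 : ℕ) : ℝ) ^ ((2 : ℝ) / d)) ^ (-(r + 1)) := by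
          apply Real.rpow_le_rpow_of_nonpos (by positivity) hle
          nlinarith
      _ = c₀ ^ (-(r + 1)) * ((n + 1 : ℕ) : ℝ) ^ ((2 : ℝ) / d * (-(r + 1))) := by
          rw [Real.mul_rpow hc₀.le hn1.le, ← Real.rpow_mul hn0]
  -- main estimate
  have key : Summable (fun n : ℕ => ‖g (n + 1) • c (n + 1)‖) := by
    have hbase : Summable (fun n : ℕ =>
        C / 2 * (lam (n + 1) ^ (r : ℝ) * (g (n + 1)) ^ 2 + lam (n + 1) ^ (-(r + 1)))) :=
      (hg.add h1).mul_left _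
    refine Summable.of_nonneg_of_le (fun n => norm_nonneg _) (fun n => ?_) hbase
    have hlp : 0 < lam (n + 1) := hlam (n + 1) (by omega)
    set a := lam (n + 1) ^ (r / 2) * |g (n + 1)| with ha
    set b := lam (n + 1) ^ (-(r + 1) / 2) with hb
    have hab : a * b = |g (n + 1)| * lam (n + 1) ^ (-(1 / 2) : ℝ) := by
      rw [ha, hb, mul_right_comm, mul_comm, ← Real.rpow_add hlp]
      congr 1
      ring
    have ha2 : a ^ 2 = lam (n + 1) ^ (r : ℝ) * (g (n + 1)) ^ 2 := by
      rw [ha, mul_pow, ← Real.rpow_natCast (lam (n+1) ^ (r/2)) 2, ← Real.rpow_mul hlp.le,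
        sq_abs]
      norm_num
    have hb2 : b ^ 2 = lam (n + 1) ^ (-(r + 1)) := by
      rw [hb, ← Real.rpow_natCast (lam (n+1) ^ (-(r+1)/2)) 2, ← Real.rpow_mul hlp.le]
      norm_num
    have hamgm : 2 * a * b ≤ a ^ 2 + b ^ 2 := two_mul_le_add_sq a b
    have hcn : ‖c (n + 1)‖ ≤ C * lam (n + 1) ^ (-(1 / 2) : ℝ) := hc (n + 1) (by omega)
    calc ‖g (n + 1) • c (n + 1)‖ = |g (n + 1)| * ‖c (n + 1)‖ := by
          rw [norm_smul, Real.norm_eq_abs]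
      _ ≤ |g (n + 1)| * (C * lam (n + 1) ^ (-(1 / 2) : ℝ)) :=
          mul_le_mul_of_nonneg_left hcn (abs_nonneg _)
      _ = C * (a * b) := by rw [hab]; ring
      _ ≤ C / 2 * (a ^ 2 + b ^ 2) := by nlinarith
      _ = C / 2 * (lam (n + 1) ^ (r : ℝ) * (g (n + 1)) ^ 2 + lam (n + 1) ^ (-(r + 1))) := by
          rw [ha2, hb2]
  exact ⟨key, key.of_norm⟩
end
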